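/- If F and G are U-statistics of orders k and l respectively (driven by symmetric functions f and g), then the (k+l)-th iterated difference D^{k+l}_{y₁,…,y_{k+l}}(F·G) is a deterministic function of y₁,…,y_{k+l} (does not depend on the configuration), and consequently D^{n}(F·G) = 0 for all n > k + l. -/

import Mathlib

/-- The difference operator `D_y F(x) = F(x ∪ {y}) − F(x)`. -/
def diffF {B : Type*} [DecidableEq B] (y : B) (F : Finset B → ℝ) : Finset B → ℝ :=
  fun x => F (insert y x) - F x

/-- The iterated difference operator. -/
def diffIterF {B : Type*} [DecidableEq B] : List B → (Finset B → ℝ) → Finset B → ℝ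
  | [], F => F
  | y :: ys, F => diffF y (diffIterF ys F)

/-- The set `x^k_≠` of `k`-tuples of pairwise distinct points of a configuration `x`. -/
def distinctTuples {B : Type*} [DecidableEq B] (k : ℕ) (x : Finset B) :
    Finset (Fin k → B) :=
  (Fintype.piFinset fun _ : Fin k => x).filter Function.Injective

/-- The `U`-statistic of order `k` driven by `f`. -/
def Ustat {B : Type*} [DecidableEq B] (k : ℕ) (f : (Fin k → B) → ℝ) (x : Finset B) : ℝ :=
  ∑ t ∈ distinctTuples k x, f t

/-
Expanding both sums, `F x * G x = ∑_{s ⊆ x} φ s`, where `φ s` (`prodKernel f g s`) collects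
the products `f t * g u` over the pairs of distinct tuples whose ranges together exhaust `s`;
so `φ` vanishes on sets with more than `k + l` points. For any such expansion, the iterated
difference along new distinct points `y₁, …, yₙ` is `∑_{s ⊆ x} φ (s ∪ {y₁, …, yₙ})`, and once
`n ≥ k + l` only `s = ∅` survives, leaving `φ {y₁, …, yₙ}`, which is `0` for `n > k + l`.
-/

open Finset

section PowersetExpansion

variable {B : Type*} [DecidableEq B]

theorem diffIterF_sum_powerset (φ : Finset B → ℝ) :
    ∀ (ys : List B) (x : Finset B), ys.Nodup → Disjoint x ys.toFinset →
      diffIterF ys (fun z => ∑ s ∈ z.powerset, φ s) x = ∑ s ∈ x.powerset, φ (s ∪ ys.toFinset)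
  | [], x, _, _ => by simp [diffIterF]
  | y :: ys, x, hnd, hdisj => by
    obtain ⟨hy, hnd⟩ := List.nodup_cons.1 hnd
    rw [List.toFinset_cons, disjoint_insert_right] at hdisj
    obtain ⟨hyx, hdisj⟩ := hdisj
    have hdisj' : Disjoint (insert y x) ys.toFinset :=
      disjoint_insert_left.2 ⟨by simpa using hy, hdisj⟩
    simp only [diffIterF, diffF]
    rw [diffIterF_sum_powerset φ ys _ hnd hdisj', diffIterF_sum_powerset φ ys x hnd hdisj,
      sum_powerset_insert hyx, add_sub_cancel_left, List.toFinset_cons]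
    simp only [insert_union, union_insert]

theorem diffIterF_sum_powerset_of_card_le (φ : Finset B → ℝ) {m : ℕ}
    (hφ : ∀ s : Finset B, m < #s → φ s = 0) {ys : List B} (hnd : ys.Nodup) (hm : m ≤ ys.length)
    {x : Finset B} (hdisj : Disjoint x ys.toFinset) :
    diffIterF ys (fun z => ∑ s ∈ z.powerset, φ s) x = φ ys.toFinset := by
  rw [diffIterF_sum_powerset φ ys x hnd hdisj, sum_eq_single_of_mem ∅ (empty_mem_powerset x),
    empty_union]
  intro s hs hs0
  apply hφ
  rw [card_union_of_disjoint (hdisj.mono_left (mem_powerset.1 hs)),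
    List.toFinset_card_of_nodup hnd]
  have := card_pos.2 (nonempty_iff_ne_empty.2 hs0)
  omega

end PowersetExpansion

section ProductKernel

variable {B : Type*} [DecidableEq B] {k l : ℕ}

theorem mem_distinctTuples {t : Fin k → B} {x : Finset B} :
    t ∈ distinctTuples k x ↔ univ.image t ⊆ x ∧ Function.Injective t := by
  simp [distinctTuples, Fintype.mem_piFinset, image_subset_iff]

def pairSupport (p : (Fin k → B) × (Fin l → B)) : Finset B :=
  univ.image p.1 ∪ univ.image p.2

theorem card_pairSupport_le (p : (Fin k → B) × (Fin l → B)) : #(pairSupport p) ≤ k + l := by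
  refine (card_union_le _ _).trans (add_le_add ?_ ?_) <;>
    exact card_image_le.trans (card_fin _).le

def prodKernel (f : (Fin k → B) → ℝ) (g : (Fin l → B) → ℝ) (s : Finset B) : ℝ :=
  ∑ p ∈ (distinctTuples k s ×ˢ distinctTuples l s) with pairSupport p = s, f p.1 * g p.2

theorem prodKernel_eq_zero_of_lt_card (f : (Fin k → B) → ℝ) (g : (Fin l → B) → ℝ)
    {s : Finset B} (hs : k + l < #s) : prodKernel f g s = 0 := by
  refine sum_eq_zero fun p hp => absurd (card_pairSupport_le p) ?_
  rw [(mem_filter.1 hp).2]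
  omega

theorem Ustat_mul_Ustat_eq_sum_powerset (f : (Fin k → B) → ℝ) (g : (Fin l → B) → ℝ)
    (x : Finset B) : Ustat k f x * Ustat l g x = ∑ s ∈ x.powerset, prodKernel f g s := by
  have hmaps : ∀ p ∈ distinctTuples k x ×ˢ distinctTuples l x, pairSupport p ∈ x.powerset := by
    intro p hp
    simp only [mem_product, mem_distinctTuples] at hp
    exact mem_powerset.2 (union_subset hp.1.1 hp.2.1)
  rw [Ustat, Ustat, sum_mul_sum, ← sum_product', ← sum_fiberwise_of_maps_to hmaps]
  refine sum_congr rfl fun s hs => sum_congr ?_ fun _ _ => rfl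
  refine Finset.ext fun p => ?_
  simp only [mem_filter, mem_product, mem_distinctTuples]
  constructor
  · rintro ⟨⟨⟨-, h1⟩, -, h2⟩, rfl⟩
    exact ⟨⟨⟨subset_union_left, h1⟩, subset_union_right, h2⟩, rfl⟩
  · rintro ⟨⟨⟨-, h1⟩, -, h2⟩, rfl⟩
    have hsx := mem_powerset.1 hs
    exact ⟨⟨⟨subset_union_left.trans hsx, h1⟩, subset_union_right.trans hsx, h2⟩, rfl⟩

theorem diffIterF_Ustat_mul_Ustat (f : (Fin k → B) → ℝ) (g : (Fin l → B) → ℝ) {ys : List B}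
    (hnd : ys.Nodup) (hkl : k + l ≤ ys.length) {x : Finset B} (hdisj : Disjoint x ys.toFinset) :
    diffIterF ys (fun z => Ustat k f z * Ustat l g z) x = prodKernel f g ys.toFinset := by
  simp only [Ustat_mul_Ustat_eq_sum_powerset]
  exact diffIterF_sum_powerset_of_card_le _ (fun _ => prodKernel_eq_zero_of_lt_card f g) hnd hkl
    hdisj

theorem disjoint_toFinset_ofFn {n : ℕ} {y : Fin n → B} {x : Finset B} (hx : ∀ i, y i ∉ x) :
    Disjoint x (List.ofFn y).toFinset := by
  refine disjoint_left.2 fun a ha hmem => ?_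
  obtain ⟨i, rfl⟩ := List.mem_ofFn.1 (List.mem_toFinset.1 hmem)
  exact hx i ha

end ProductKernel

theorem diffIter_prod_Ustat_general {B : Type*} [DecidableEq B] (k l : ℕ)
    (f : (Fin k → B) → ℝ)
    (g : (Fin l → B) → ℝ) :
    (∀ y : Fin (k + l) → B, Function.Injective y →
      ∃ c : ℝ, ∀ x : Finset B, (∀ i, y i ∉ x) →
        diffIterF (List.ofFn y) (fun z => Ustat k f z * Ustat l g z) x = c) ∧
    (∀ n : ℕ, k + l < n → ∀ y : Fin n → B, Function.Injective y →
      ∀ x : Finset B, (∀ i, y i ∉ x) →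
        diffIterF (List.ofFn y) (fun z => Ustat k f z * Ustat l g z) x = 0) := by
  refine ⟨fun y hy => ⟨prodKernel f g (List.ofFn y).toFinset, fun x hx => ?_⟩,
    fun n hn y hy x hx => ?_⟩
  · exact diffIterF_Ustat_mul_Ustat f g (List.nodup_ofFn.2 hy) (by simp)
      (disjoint_toFinset_ofFn hx)
  · rw [diffIterF_Ustat_mul_Ustat f g (List.nodup_ofFn.2 hy) (by simpa using hn.le)
      (disjoint_toFinset_ofFn hx)]
    refine prodKernel_eq_zero_of_lt_card f g ?_
    rwa [List.toFinset_card_of_nodup (List.nodup_ofFn.2 hy), List.length_ofFn]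

/-- For `U`-statistics `F, G` of orders `k, l`, the `(k+l)`-th iterated difference of the
product `F·G` does not depend on the configuration (it is a deterministic function of the
points `y₁,…,y_{k+l}`), and all higher iterated differences vanish. -/
theorem diffIter_prod_Ustat {B : Type*} [DecidableEq B] (k l : ℕ)
    (f : (Fin k → B) → ℝ) (hfsym : ∀ (σ : Equiv.Perm (Fin k)) (t : Fin k → B), f (t ∘ σ) = f t)
    (g : (Fin l → B) → ℝ) (hgsym : ∀ (σ : Equiv.Perm (Fin l)) (t : Fin l → B), g (t ∘ σ) = g t) :
    (∀ y : Fin (k + l) → B, Function.Injective y →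
      ∃ c : ℝ, ∀ x : Finset B, (∀ i, y i ∉ x) →
        diffIterF (List.ofFn y) (fun z => Ustat k f z * Ustat l g z) x = c) ∧
    (∀ n : ℕ, k + l < n → ∀ y : Fin n → B, Function.Injective y →
      ∀ x : Finset B, (∀ i, y i ∉ x) →
        diffIterF (List.ofFn y) (fun z => Ustat k f z * Ustat l g z) x = 0) :=
  diffIter_prod_Ustat_general k l f g
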